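/- Let k ≥ 1. Then G_{k+1} is the disjoint union over w ∈ G_k of the sets Succ(w); that is, every good involution in B_{k+1} lies in Succ(w) for exactly one good involution w ∈ G_k. -/

import Mathlib

namespace PaperB

open scoped Classical

def B (n : ℕ) : Subgroup (Equiv.Perm ℤ) where
  carrier := {w | (∀ i : ℤ, w (-i) = - w i) ∧ ∀ i : ℤ, (n : ℤ) < |i| → w i = i}
  one_mem' := ⟨fun _ => rfl, fun _ _ => rfl⟩
  mul_mem' := by
    rintro a b ⟨ha1, ha2⟩ ⟨hb1, hb2⟩
    refine ⟨fun i => ?_, fun i hi => ?_⟩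
    · rw [Equiv.Perm.mul_apply, Equiv.Perm.mul_apply, hb1, ha1]
    · rw [Equiv.Perm.mul_apply, hb2 i hi, ha2 i hi]
  inv_mem' := by
    rintro a ⟨ha1, ha2⟩
    refine ⟨fun i => a.injective ?_, fun i hi => a.injective ?_⟩
    · rw [Equiv.Perm.inv_def, Equiv.apply_symm_apply, ha1, Equiv.apply_symm_apply]
    · rw [Equiv.Perm.inv_def, Equiv.apply_symm_apply, ha2 i hi]

def t : Equiv.Perm ℤ := Equiv.swap (-1) 1

def s (i : ℕ) : Equiv.Perm ℤ :=
  Equiv.swap (i : ℤ) ((i : ℤ) + 1) * Equiv.swap (-(i : ℤ)) (-((i : ℤ) + 1))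

def gens (n : ℕ) : Set (Equiv.Perm ℤ) := insert t (s '' Set.Ico 1 n)

noncomputable def len (n : ℕ) (w : Equiv.Perm ℤ) : ℕ :=
  sInf {l | ∃ L : List (Equiv.Perm ℤ), (∀ g ∈ L, g ∈ gens n) ∧ L.prod = w ∧ L.length = l}

/-- A model of the Iwahori–Hecke algebra `H_{p,q}(Bₘ)`:  a `ℂ`-algebra `H` together with a
family `T w`, `w ∈ Bₘ`, which is linearly independent, satisfies `T 1 = 1`, and satisfies the
standard multiplication rule
`T w * T g = T (w g)` if `ℓ(w g) > ℓ(w)` and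
`T w * T g = par(g) T (w g) + (1 - par(g)) T w` otherwise,
where `par t = p` and `par sᵢ = q`. -/
structure HeckeModel (m : ℕ) (p q : ℂ) (H : Type) [Ring H] [Algebra ℂ H] where
  T : Equiv.Perm ℤ → H
  T_one : T 1 = 1
  T_mul : ∀ w ∈ B m, ∀ g ∈ gens m,
    T w * T g =
      if len m w < len m (w * g) then T (w * g)
      else (if g = t then p else q) • T (w * g) + (1 - if g = t then p else q) • T w
  free : LinearIndependent ℂ (fun w : {x // x ∈ B m} => T w.1)

/-- The element `-w`, given by `(-w)(i) = -(w i)`. -/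
def negOf (w : Equiv.Perm ℤ) : Equiv.Perm ℤ := (Equiv.neg ℤ : Equiv.Perm ℤ) * w

/-- A good involution in `B_k`. -/
def Good (k : ℕ) (w : Equiv.Perm ℤ) : Prop :=
  w ∈ B k ∧ w * w = 1 ∧ ∀ i : ℤ, 1 ≤ i → i ≤ (k : ℤ) → (w i = i ∨ w i < 0)

/-- `a(w)`: the number of `1 ≤ j ≤ m` with `w j = j`. -/
noncomputable def aFix (m : ℕ) (w : Equiv.Perm ℤ) : ℕ :=
  ((Finset.Icc (1 : ℤ) (m : ℤ)).filter fun j => w j = j).card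

/-- `d(i, w)`: the number of `i < j ≤ m` with `w j = j`. -/
noncomputable def dFix (m : ℕ) (i : ℤ) (w : Equiv.Perm ℤ) : ℕ :=
  ((Finset.Ioc i (m : ℤ)).filter fun j => w j = j).card

/-- `c(w)`: the number of `w`-tidy pairs `{i, j}`, i.e. pairs of distinct indices
`1 ≤ i, j ≤ m` with `-w i < j` and `-w j < i`. -/
noncomputable def cTidy (m : ℕ) (w : Equiv.Perm ℤ) : ℕ :=
  (((Finset.Icc (1 : ℤ) (m : ℤ)) ×ˢ (Finset.Icc (1 : ℤ) (m : ℤ))).filter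
    fun pr => pr.1 < pr.2 ∧ -w pr.1 < pr.2 ∧ -w pr.2 < pr.1).card

/-- `x = t s₁ s₂ ⋯ s_k ∈ B_{k+1}`. -/
def xE (k : ℕ) : Equiv.Perm ℤ := (t :: ((List.range k).map fun j => s (j + 1))).prod

/-- `xᵢ = t s₁ ⋯ ŝᵢ ⋯ s_k ∈ B_{k+1}` (the product with `sᵢ` omitted). -/
def xI (k i : ℕ) : Equiv.Perm ℤ :=
  (t :: ((((List.range k).map fun j => j + 1).filter fun j => j ≠ i).map s)).prod


/-- The parabolic subgroup `S_k ⊆ B_k` generated by `s₁, …, s_{k-1}`. -/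
def Spar (k : ℕ) : Subgroup (Equiv.Perm ℤ) := Subgroup.closure (s '' Set.Ico 1 k)

/-- `c(-w)` for `w ∈ S_k`: the number of neat pairs of `w`, i.e. pairs `{i,j}` of distinct
indices `1 ≤ i, j ≤ k` with `w i < j` and `w j < i`. -/
noncomputable def cNeat (k : ℕ) (w : Equiv.Perm ℤ) : ℕ :=
  (((Finset.Icc (1 : ℤ) (k : ℤ)) ×ˢ (Finset.Icc (1 : ℤ) (k : ℤ))).filter
    fun pr => pr.1 < pr.2 ∧ w pr.1 < pr.2 ∧ w pr.2 < pr.1).card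

/-- The set `X_{0,k}` of distinguished (minimal length) right coset representatives of
`S_k` in `B_k`. -/
def X0 (k : ℕ) : Set (Equiv.Perm ℤ) :=
  {x | x ∈ B k ∧ ∀ u ∈ Spar k, len k x ≤ len k (u * x)}

/-- `Succ(w)` for a good involution `w ∈ G_k`. -/
def Succ (k : ℕ) (w : Equiv.Perm ℤ) : Set (Equiv.Perm ℤ) :=
  {xE k * w * (xE k)⁻¹, xE k * w * (xE k)⁻¹ * t} ∪
    {y | ∃ i : ℕ, 1 ≤ i ∧ i ≤ k ∧ w (i : ℤ) = (i : ℤ) ∧ y = xE k * w * (xI k i)⁻¹}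

/-- The element `c = s_{n+1} s_{n+2} ⋯ s_{n+k} ∈ B_{n+k+1}`. -/
def cElt (n k : ℕ) : Equiv.Perm ℤ := ((List.range k).map fun j => s (n + 1 + j)).prod

/-- The palindromic product `s_{n+k} s_{n+k-1} ⋯ s_{n+i} ⋯ s_{n+k-1} s_{n+k}`. -/
def pal (n k i : ℕ) : Equiv.Perm ℤ :=
  (((List.range (k - i)).map fun j => s (n + k - j)) ++ [s (n + i)] ++
    ((List.range (k - i)).map fun j => s (n + i + 1 + j))).prod

/-- The parabolic subgroup `B_n × S_k` of `B_{n+k}`, generated by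
`{t, s₁, …, s_{n-1}} ∪ {s_{n+1}, …, s_{n+k-1}}` (with `t` omitted when `n = 0`). -/
def P (n k : ℕ) : Subgroup (Equiv.Perm ℤ) :=
  Subgroup.closure
    ((if n = 0 then (∅ : Set (Equiv.Perm ℤ)) else {t}) ∪ s '' Set.Ico 1 n ∪
      s '' Set.Ico (n + 1) (n + k))

/-- The factor `S_k` of `B_n × S_k`, generated by `s_{n+1}, …, s_{n+k-1}`. -/
def SparF (n k : ℕ) : Subgroup (Equiv.Perm ℤ) := Subgroup.closure (s '' Set.Ico (n + 1) (n + k))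

/-- The set `X_{n,k}` of distinguished (minimal length) right coset representatives of
`B_n × S_k` in `B_{n+k}`. -/
def Xnk (n k : ℕ) : Set (Equiv.Perm ℤ) :=
  {x | x ∈ B (n + k) ∧ ∀ u ∈ P n k, len (n + k) x ≤ len (n + k) (u * x)}

/-- The strict Bruhat order on `B_m`: `x < w` iff `x ≠ w` and some reduced expression of `w`
has a subword whose product is `x`. -/
def bruhatLT (m : ℕ) (x w : Equiv.Perm ℤ) : Prop :=
  x ≠ w ∧ ∃ L : List (Equiv.Perm ℤ), (∀ g ∈ L, g ∈ gens m) ∧ L.prod = w ∧ L.length = len m w ∧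
    ∃ L' : List (Equiv.Perm ℤ), L'.Sublist L ∧ L'.prod = x

/-!
Let `a = v(1)`, which is `1` or negative because `v` is good, and let `r` be the reflection
exchanging `±1` with `±a`. Since `v` maps `1 ↦ a ↦ 1`, it commutes with `r`, and `v r` is a good
involution fixing `1`; conjugation by `x = t s₁ ⋯ s_k` (the signed cycle `1 → 2 → ⋯ → k+1 → -1`)
turns it into `w = x⁻¹ v r x ∈ G_k`. As `xᵢ = r x` for `a = -(i+1)`, the three kinds of elements of
`Succ(w)` are `x w x⁻¹ r` with `a = 1`, `a = -1` and `a = -(i+1)`, `w(i) = i`; conversely every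
element `v` of `Succ(w)` has this form with `a = v(1)`, which recovers `w`.
-/

open Equiv

namespace B

variable {n : ℕ} {w : Perm ℤ}

lemma apply_neg (hw : w ∈ B n) (j : ℤ) : w (-j) = -w j := hw.1 j

lemma apply_of_lt_abs (hw : w ∈ B n) {j : ℤ} (hj : (n : ℤ) < |j|) : w j = j := hw.2 j hj

lemma apply_zero (hw : w ∈ B n) : w 0 = 0 := by
  have := apply_neg hw 0
  rw [neg_zero] at this
  omega

lemma apply_ne_zero (hw : w ∈ B n) {j : ℤ} (hj : j ≠ 0) : w j ≠ 0 := by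
  rw [← apply_zero hw]
  exact w.injective.ne hj

lemma abs_apply_le (hw : w ∈ B n) {j : ℤ} (hj : |j| ≤ n) : |w j| ≤ n := by
  by_contra h
  have := w.injective (apply_of_lt_abs hw (not_le.mp h))
  rw [this] at h
  exact h hj

lemma mem_of_mem_succ (hw : w ∈ B (n + 1)) (hfix : w (n + 1) = n + 1) : w ∈ B n := by
  refine ⟨apply_neg hw, fun j hj => ?_⟩
  rcases lt_or_eq_of_le (Int.add_one_le_of_lt hj) with hlt | heq
  · exact apply_of_lt_abs hw (by push_cast; omega)
  · rcases abs_choice j with h | h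
    · rw [← h, ← heq, hfix]
    · rw [← neg_neg j, apply_neg hw, ← h, ← heq, hfix]

end B

lemma s_apply (n : ℕ) (j : ℤ) (hn : 1 ≤ n) :
    s n j = if j = n then (n : ℤ) + 1 else if j = (n : ℤ) + 1 then (n : ℤ)
      else if j = -(n : ℤ) then -((n : ℤ) + 1) else if j = -((n : ℤ) + 1) then -(n : ℤ) else j := by
  simp only [s, Perm.mul_apply, swap_apply_def]
  split_ifs <;> omega

lemma xE_succ (k : ℕ) : xE (k + 1) = xE k * s (k + 1) := by
  simp [xE, List.range_succ, mul_assoc]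

lemma xE_apply (k : ℕ) (j : ℤ) :
    xE k j = if 1 ≤ j ∧ j ≤ k then j + 1 else if j = k + 1 then -1
      else if -k ≤ j ∧ j ≤ -1 then j - 1 else if j = -(k + 1) then 1 else j := by
  induction k generalizing j with
  | zero => simp only [xE, List.range_zero, List.map_nil, List.prod_cons, List.prod_nil,
      mul_one, t, swap_apply_def]; split_ifs <;> omega
  | succ k ih =>
    rw [xE_succ, Perm.mul_apply, s_apply _ _ (by omega), ih]
    push_cast
    split_ifs <;> omega

lemma xE_inv_apply (k : ℕ) (j : ℤ) :
    (xE k)⁻¹ j = if 2 ≤ j ∧ j ≤ k + 1 then j - 1 else if j = 1 then -(k + 1)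
      else if -(k + 1) ≤ j ∧ j ≤ -2 then j + 1 else if j = -1 then k + 1 else j := by
  rw [Perm.inv_def, symm_apply_eq, xE_apply]
  split_ifs <;> omega

lemma xE_mem_B (k : ℕ) : xE k ∈ B (k + 1) := by
  refine ⟨fun j => ?_, fun j hj => ?_⟩
  · rw [xE_apply, xE_apply]; split_ifs <;> omega
  · rw [xE_apply]; push_cast at hj; rw [lt_abs] at hj; split_ifs <;> omega

/-- The reflection of `B_n` exchanging `a ↔ b` and `-a ↔ -b`. -/
def signedSwap (a b : ℤ) : Perm ℤ :=
  if a = -b then swap a b else swap a b * swap (-a) (-b)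

lemma signedSwap_apply {a b : ℤ} (ha : a ≠ 0) (hb : b ≠ 0) (j : ℤ) :
    signedSwap a b j = if j = a then b else if j = b then a
      else if j = -a then -b else if j = -b then -a else j := by
  unfold signedSwap
  split_ifs <;> simp only [Perm.mul_apply, swap_apply_def] <;> split_ifs <;> omega

lemma signedSwap_self (a : ℤ) (ha : a ≠ 0) : signedSwap a a = 1 := by
  ext j; rw [signedSwap_apply ha ha]; split_ifs <;> simp_all

lemma signedSwap_apply_left {a : ℤ} (ha : a ≠ 0) (b : ℤ) : signedSwap a b a = b := by
  unfold signedSwap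
  split_ifs <;> simp only [Perm.mul_apply, swap_apply_def] <;> split_ifs <;> omega

lemma signedSwap_comm (a b : ℤ) : signedSwap a b = signedSwap b a := by
  unfold signedSwap
  rw [swap_comm a b, swap_comm (-a) (-b)]
  exact if_congr (by omega) rfl rfl

lemma signedSwap_mul_self {a b : ℤ} (ha : a ≠ 0) (hb : b ≠ 0) :
    signedSwap a b * signedSwap a b = 1 := by
  ext j
  simp only [Perm.mul_apply, signedSwap_apply ha hb, Perm.one_apply]
  split_ifs <;> omega

lemma signedSwap_mem_B {n : ℕ} {a b : ℤ} (ha : a ≠ 0) (hb : b ≠ 0) (han : |a| ≤ n)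
    (hbn : |b| ≤ n) : signedSwap a b ∈ B n := by
  rw [abs_le] at han hbn
  refine ⟨fun j => ?_, fun j hj => ?_⟩
  · simp only [signedSwap_apply ha hb]; split_ifs <;> omega
  · rw [lt_abs] at hj; rw [signedSwap_apply ha hb]; split_ifs <;> omega

lemma mul_signedSwap_mul_inv {σ : Perm ℤ} (hσ : ∀ j, σ (-j) = -σ j) (a b : ℤ) :
    σ * signedSwap a b * σ⁻¹ = signedSwap (σ a) (σ b) := by
  have hneg : σ a = -σ b ↔ a = -b := by rw [← hσ, σ.injective.eq_iff]
  unfold signedSwap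
  rw [if_congr hneg rfl rfl]
  split_ifs
  · rw [swap_apply_apply]
  · rw [← hσ, ← hσ, swap_apply_apply, swap_apply_apply]; group

lemma xI_self (i : ℕ) : xI (i + 1) (i + 1) = xE i := by
  have h : (((List.range (i + 1)).map fun j => j + 1).filter fun j => j ≠ i + 1) =
      (List.range i).map fun j => j + 1 := by
    rw [List.range_succ, List.map_append, List.filter_append, List.filter_eq_self.mpr]
    · simp
    · intro a ha
      simp only [List.mem_map, List.mem_range] at ha
      obtain ⟨b, hb, rfl⟩ := ha
      simp only [ne_eq, decide_eq_true_eq]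
      omega
  simp only [xI, h, xE, List.map_map]
  rfl

lemma xI_succ {k i : ℕ} (hik : i ≤ k) : xI (k + 1) i = xI k i * s (k + 1) := by
  have hne : k + 1 ≠ i := by omega
  simp [xI, List.range_succ, List.filter_append, hne, mul_assoc]

lemma xI_eq {k i : ℕ} (hi : 1 ≤ i) (hik : i ≤ k) :
    xI k i = signedSwap 1 (-(i + 1)) * xE k := by
  induction k, hik using Nat.le_induction with
  | base =>
    obtain ⟨m, rfl⟩ : ∃ m, i = m + 1 := ⟨i - 1, by omega⟩
    rw [xI_self, xE_succ]
    ext j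
    have hm : -(((m + 1 : ℕ) : ℤ) + 1) ≠ 0 := by omega
    simp only [Perm.mul_apply]
    rw [s_apply _ _ (by omega)]
    push_cast at hm ⊢
    split_ifs <;> simp only [xE_apply] <;> split_ifs <;>
      rw [signedSwap_apply one_ne_zero hm] <;> split_ifs <;> first | contradiction | omega
  | succ k hk ih => rw [xI_succ hk, ih, xE_succ, mul_assoc]

lemma signedSwap_one_neg_one : signedSwap 1 (-1) = t := by
  rw [signedSwap, neg_neg, if_pos rfl, t, swap_comm]

lemma xE_mul_mul_inv_xI {k i : ℕ} (hi : 1 ≤ i) (hik : i ≤ k) (w : Perm ℤ) :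
    xE k * w * (xI k i)⁻¹ = xE k * w * (xE k)⁻¹ * signedSwap 1 (-(i + 1)) := by
  rw [xI_eq hi hik, mul_inv_rev,
    inv_eq_of_mul_eq_one_right (signedSwap_mul_self one_ne_zero (by omega))]
  simp only [mul_assoc]

lemma Good.mul_signedSwap {n : ℕ} {v : Perm ℤ} (hv : Good n v) (hn : 1 ≤ n) :
    Good n (v * signedSwap 1 (v 1)) ∧ (v * signedSwap 1 (v 1)) 1 = 1 := by
  obtain ⟨hvB, hvv, hvgood⟩ := hv
  have hv2 (j : ℤ) : v (v j) = j := by rw [← Perm.mul_apply, hvv, Perm.one_apply]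
  set a := v 1 with ha
  have ha0 : a ≠ 0 := B.apply_ne_zero hvB one_ne_zero
  have han : |a| ≤ n := B.abs_apply_le hvB (by simp; omega)
  have hsign : a = 1 ∨ a < 0 := hvgood 1 le_rfl (by omega)
  set z := signedSwap 1 a
  have hcomm : v * z = z * v := by
    rw [← mul_inv_eq_iff_eq_mul, mul_signedSwap_mul_inv (B.apply_neg hvB), hv2, ← ha,
      signedSwap_comm]
  have hz : z * z = 1 := signedSwap_mul_self one_ne_zero ha0
  have hu1 : (v * z) 1 = 1 := by rw [Perm.mul_apply, signedSwap_apply_left one_ne_zero, hv2]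
  refine ⟨⟨mul_mem hvB (signedSwap_mem_B one_ne_zero ha0 (by simp; omega) han), ?_,
    fun j hj1 hjn => ?_⟩, hu1⟩
  · calc v * z * (v * z) = v * (z * v) * z := by group
      _ = 1 := by rw [← hcomm, ← mul_assoc, hvv, one_mul, hz]
  · rcases eq_or_ne j 1 with rfl | hj
    · exact Or.inl hu1
    rw [Perm.mul_apply]
    by_cases hja : j = -a
    · have hzj : z j = -1 := by rw [signedSwap_apply one_ne_zero ha0]; split_ifs <;> omega
      rw [hzj, B.apply_neg hvB, ← ha, hja]
      exact Or.inl rfl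
    · have hzj : z j = j := by rw [signedSwap_apply one_ne_zero ha0]; split_ifs <;> omega
      rw [hzj]
      exact hvgood j hj1 hjn

lemma Good.inv_xE_mul_mul_xE {k : ℕ} {u : Perm ℤ} (hu : Good (k + 1) u) (h1 : u 1 = 1) :
    Good k ((xE k)⁻¹ * u * xE k) := by
  obtain ⟨huB, huu, hugood⟩ := hu
  have hm1 : u (-1) = -1 := by rw [B.apply_neg huB, h1]
  have hxB := xE_mem_B k
  refine ⟨B.mem_of_mem_succ (mul_mem (mul_mem (inv_mem hxB) huB) hxB) ?_, ?_,
    fun j hj1 hjk => ?_⟩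
  · rw [Perm.mul_apply, Perm.mul_apply, xE_apply, if_neg (by omega), if_pos rfl, hm1,
      Perm.inv_eq_iff_eq, xE_apply]
    split_ifs <;> omega
  · calc (xE k)⁻¹ * u * xE k * ((xE k)⁻¹ * u * xE k) = (xE k)⁻¹ * (u * u) * xE k := by group
      _ = 1 := by rw [huu, mul_one, inv_mul_cancel]
  · rw [Perm.mul_apply, Perm.mul_apply, xE_apply, if_pos ⟨hj1, hjk⟩]
    rcases hugood (j + 1) (by omega) (by push_cast; omega) with h | h
    · left
      rw [h, xE_inv_apply]
      split_ifs <;> omega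
    · right
      have hb := B.abs_apply_le huB (j := j + 1) (by rw [abs_le]; push_cast; omega)
      have hne : u (j + 1) ≠ -1 := fun h' => by
        have := u.injective (h'.trans hm1.symm)
        omega
      rw [abs_le] at hb
      push_cast at hb
      rw [xE_inv_apply]
      split_ifs <;> omega

lemma eq_mul_signedSwap_of_mem_Succ {k : ℕ} {w v : Perm ℤ} (hw : Good k w)
    (hv : v ∈ Succ k w) : v = xE k * w * (xE k)⁻¹ * signedSwap 1 (v 1) := by
  have key (c : ℤ) (hc : w c = c) (hv' : v = xE k * w * (xE k)⁻¹ * signedSwap 1 (xE k c)) :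
      v = xE k * w * (xE k)⁻¹ * signedSwap 1 (v 1) := by
    have : v 1 = xE k c := by
      rw [hv', Perm.mul_apply, signedSwap_apply_left one_ne_zero]
      simp [Perm.mul_apply, hc]
    rwa [this]
  have hwB := hw.1
  rcases hv with (rfl | rfl) | ⟨i, hi1, hik, hwi, rfl⟩
  · refine key (-(k + 1)) (B.apply_of_lt_abs hwB (by rw [lt_abs]; omega)) ?_
    rw [show xE k (-(k + 1)) = 1 by rw [xE_apply]; split_ifs <;> omega,
      signedSwap_self 1 one_ne_zero, mul_one]
  · refine key (k + 1) (B.apply_of_lt_abs hwB (by rw [lt_abs]; omega)) ?_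
    rw [show xE k (k + 1) = -1 by rw [xE_apply]; split_ifs <;> omega, signedSwap_one_neg_one]
  · refine key (-i) (by rw [B.apply_neg hwB, hwi]) ?_
    rw [show xE k (-i) = -(i + 1) by rw [xE_apply]; split_ifs <;> omega,
      xE_mul_mul_inv_xI hi1 hik]

lemma mem_Succ_inv_xE_mul_mul_xE {k : ℕ} {v : Perm ℤ} (hv : Good (k + 1) v) :
    v ∈ Succ k ((xE k)⁻¹ * (v * signedSwap 1 (v 1)) * xE k) := by
  set z := signedSwap 1 (v 1)
  set w := (xE k)⁻¹ * (v * z) * xE k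
  have ha0 : v 1 ≠ 0 := B.apply_ne_zero hv.1 one_ne_zero
  have hconj : xE k * w * (xE k)⁻¹ = v * z := by simp only [w]; group
  have hvz : v * z * z = v := by rw [mul_assoc, signedSwap_mul_self one_ne_zero ha0, mul_one]
  have hlow : -(k + 1 : ℤ) ≤ v 1 := by
    have := B.abs_apply_le hv.1 (j := 1) (by simp)
    rw [abs_le] at this
    push_cast at this
    omega
  rcases hv.2.2 1 le_rfl (by omega) with h1 | hneg
  · have hz1 : z = 1 := by simp only [z, h1, signedSwap_self 1 one_ne_zero]
    refine Or.inl (Or.inl ?_)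
    rw [hconj, hz1, mul_one]
  rcases eq_or_ne (v 1) (-1) with hm1 | hm1
  · refine Or.inl (Or.inr (Set.mem_singleton_iff.mpr ?_))
    rw [hconj, ← signedSwap_one_neg_one, ← hm1, hvz]
  obtain ⟨i, hi⟩ : ∃ i : ℕ, v 1 = -(i + 1) := ⟨(-v 1 - 1).toNat, by omega⟩
  refine Or.inr ⟨i, by omega, by omega, ?_, ?_⟩
  · have hzi : z (i + 1) = -1 := by
      rw [signedSwap_apply one_ne_zero ha0]
      split_ifs <;> omega
    simp only [w, Perm.mul_apply]
    rw [show xE k i = i + 1 by rw [xE_apply]; split_ifs <;> omega, hzi,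
      B.apply_neg hv.1, hi, neg_neg, xE_inv_apply]
    split_ifs <;> omega
  · rw [xE_mul_mul_inv_xI (by omega) (by omega), hconj, ← hi, hvz]

theorem succ_partition_general (k : ℕ) (v : Equiv.Perm ℤ) (hv : Good (k + 1) v) :
    ∃! w : Equiv.Perm ℤ, Good k w ∧ v ∈ Succ k w := by
  obtain ⟨hu, hu1⟩ := hv.mul_signedSwap (by omega)
  refine ⟨_, ⟨hu.inv_xE_mul_mul_xE hu1, mem_Succ_inv_xE_mul_mul_xE hv⟩, ?_⟩
  rintro w ⟨hw, hvw⟩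
  set z := signedSwap 1 (v 1)
  have hz : z * z = 1 := signedSwap_mul_self one_ne_zero (B.apply_ne_zero hv.1 one_ne_zero)
  rw [eq_mul_signedSwap_of_mem_Succ hw hvw, mul_assoc _ z z, hz]
  group

theorem succ_partition (k : ℕ) (hk : 1 ≤ k) (v : Equiv.Perm ℤ) (hv : Good (k + 1) v) :
    ∃! w : Equiv.Perm ℤ, Good k w ∧ v ∈ Succ k w :=
  succ_partition_general k v hv

end PaperB
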